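/- Let G = ∫_0^1 1/(1 − log v) dv (natural logarithm, integral over (0,1)). Then for every natural number n ≥ 1, 0 < (-1)^n · (G − ∑_{k=0}^{n-1} (-1)^k · k!) < n!. In particular the partial sums ∑_{k=0}^{n-1} (-1)^k k! of the divergent factorial series are alternately smaller and larger than G. -/
import Mathlib

open MeasureTheory Set Real

noncomputable def Rg (n : ℕ) : ℝ := ∫ t in Ioi (0:ℝ), exp (-t) * (t ^ n / (1 + t))

lemma integrable_aux (n : ℕ) :
    IntegrableOn (fun t : ℝ => exp (-t) * t ^ n) (Ioi 0) := by
  have h := Real.GammaIntegral_convergent (s := (n : ℝ) + 1) (by positivity)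
  refine h.congr_fun ?_ measurableSet_Ioi
  intro x hx
  simp only [add_sub_cancel_right]
  rw [Real.rpow_natCast]

lemma fact_int (n : ℕ) :
    ∫ t in Ioi (0:ℝ), exp (-t) * t ^ n = (Nat.factorial n : ℝ) := by
  have h1 : Real.Gamma ((n : ℝ) + 1) = ∫ x in Ioi (0:ℝ), exp (-x) * x ^ (((n : ℝ) + 1) - 1) :=
    Real.Gamma_eq_integral (by positivity)
  rw [Real.Gamma_nat_eq_factorial] at h1
  rw [h1]
  refine setIntegral_congr_fun measurableSet_Ioi fun x hx => ?_
  simp only [add_sub_cancel_right]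
  rw [Real.rpow_natCast]

lemma contR (n : ℕ) : ContinuousOn (fun t : ℝ => exp (-t) * (t ^ n / (1 + t))) (Ioi 0) := by
  refine (continuous_neg.rexp.continuousOn).mul
    (ContinuousOn.div ((continuous_pow n).continuousOn)
      ((continuous_const.add continuous_id).continuousOn) fun x hx => ?_)
  have hx : (0:ℝ) < x := hx
  show (1:ℝ) + x ≠ 0
  positivity

lemma integrable_R (n : ℕ) :
    IntegrableOn (fun t : ℝ => exp (-t) * (t ^ n / (1 + t))) (Ioi 0) := by
  refine Integrable.mono' (integrable_aux n) ((contR n).aestronglyMeasurable measurableSet_Ioi) ?_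
  filter_upwards [ae_restrict_mem measurableSet_Ioi] with t ht
  have ht : (0:ℝ) < t := ht
  have h1 : (0:ℝ) < 1 + t := by linarith
  rw [Real.norm_eq_abs, abs_of_nonneg (by positivity)]
  have : t ^ n / (1 + t) ≤ t ^ n := by
    rw [div_le_iff₀ h1]; nlinarith [pow_pos ht n]
  nlinarith [Real.exp_pos (-t)]

lemma Rpos (n : ℕ) : 0 < Rg n := by
  rw [Rg, setIntegral_pos_iff_support_of_nonneg_ae]
  · have : (Function.support fun t : ℝ => exp (-t) * (t ^ n / (1 + t))) ∩ Ioi 0 = Ioi 0 := by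
      rw [inter_eq_right]
      intro t ht
      have ht : (0:ℝ) < t := ht
      have h1 : (0:ℝ) < 1 + t := by linarith
      exact Function.mem_support.mpr (by positivity)
    rw [this, Real.volume_Ioi, ← ENNReal.ofReal_zero]
    exact ENNReal.ofReal_lt_top
  · filter_upwards [ae_restrict_mem measurableSet_Ioi] with t ht
    have ht : (0:ℝ) < t := ht
    have h1 : (0:ℝ) < 1 + t := by linarith
    positivity
  · exact integrable_R n

lemma Rrec (n : ℕ) : Rg n + Rg (n + 1) = (Nat.factorial n : ℝ) := by
  rw [Rg, Rg, ← integral_add (integrable_R n) (integrable_R (n+1)), ← fact_int n]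
  refine setIntegral_congr_fun measurableSet_Ioi fun t ht => ?_
  have ht : (0:ℝ) < t := ht
  have h1 : (1:ℝ) + t ≠ 0 := by positivity
  field_simp
  ring

lemma image_exp_neg : (fun t : ℝ => exp (-t)) '' Ioi 0 = Ioo 0 1 := by
  ext y
  constructor
  · rintro ⟨t, ht, rfl⟩
    exact ⟨Real.exp_pos _, by
      rw [Real.exp_lt_one_iff]; simpa using (mem_Ioi.mp ht)⟩
  · rintro ⟨hy0, hy1⟩
    exact ⟨-Real.log y, neg_pos.mpr (Real.log_neg hy0 hy1), by
      simp [Real.exp_log hy0]⟩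

lemma G_eq_R0 : (∫ v in Ioo (0:ℝ) 1, 1 / (1 - Real.log v)) = Rg 0 := by
  have hd : ∀ t ∈ Ioi (0:ℝ), HasDerivWithinAt (fun t : ℝ => exp (-t)) (-exp (-t)) (Ioi 0) t := by
    intro t _
    have h : HasDerivAt (fun t : ℝ => exp (-t)) (exp (-t) * (-1)) t :=
      (Real.hasDerivAt_exp (-t)).comp t ((hasDerivAt_id t).neg)
    simpa using h.hasDerivWithinAt
  have hinj : InjOn (fun t : ℝ => exp (-t)) (Ioi 0) := by
    intro a _ b _ hab
    have := Real.exp_injective hab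
    linarith [neg_injective this]
  rw [← image_exp_neg, integral_image_eq_integral_abs_deriv_smul measurableSet_Ioi hd hinj, Rg]
  refine setIntegral_congr_fun measurableSet_Ioi fun t ht => ?_
  rw [Real.log_exp, abs_neg, abs_of_pos (Real.exp_pos _), smul_eq_mul, pow_zero, sub_neg_eq_add]

/-- The partial sums of the divergent factorial series are alternately below and above
the Gompertz constant `G = ∫_0^1 dv/(1 - log v)`, the remainder after `n` terms being
of the sign of the first omitted term and smaller than it in absolute value (§20). -/
theorem gompertz_factorial_series_error_bound
    (G : ℝ) (hG : G = ∫ v in Set.Ioo (0 : ℝ) 1, 1 / (1 - Real.log v)) :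
    ∀ n : ℕ, 1 ≤ n →
      0 < (-1 : ℝ) ^ n * (G - ∑ k ∈ Finset.range n, (-1 : ℝ) ^ k * (Nat.factorial k : ℝ)) ∧
      (-1 : ℝ) ^ n * (G - ∑ k ∈ Finset.range n, (-1 : ℝ) ^ k * (Nat.factorial k : ℝ)) <
        (Nat.factorial n : ℝ) := by
  have key : ∀ n : ℕ,
      (-1 : ℝ) ^ n * (G - ∑ k ∈ Finset.range n, (-1 : ℝ) ^ k * (Nat.factorial k : ℝ)) = Rg n := by
    intro n
    induction n with
    | zero => simpa using hG.trans G_eq_R0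
    | succ n ih =>
      have hsq : ((-1:ℝ) ^ n) * ((-1:ℝ) ^ n) = 1 := by
        rw [← pow_add]; exact Even.neg_one_pow ⟨n, rfl⟩
      rw [Finset.sum_range_succ, pow_succ]
      linear_combination (-1 : ℝ) * ih - Rrec n + (Nat.factorial n : ℝ) * hsq
  intro n _
  rw [key n]
  exact ⟨Rpos n, by nlinarith [Rpos (n + 1), Rrec n]⟩
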